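/- arXiv:2001.00393 — 2 statements merged into one kernel-verified Lean document; each statement's English description precedes it below -/
import Mathlib

section
/- For every natural number n, (1/(2π)) ∫₀⁴ x^n √((4-x)/x) dx equals the Catalan number C_n = (1/(n+1))·binom(2n, n). -/
open MeasureTheory Real intervalIntegral Set

/-!
Substituting `x = c sin² t` turns the `n`-th moment into `2 c ^ (n + 1) ∫₀^{π/2} sin²ⁿ t cos² t dt`.
With `cos² = 1 - sin²` and the Wallis recursion `∫ sin ^ (m + 2) = (m + 1) / (m + 2) ∫ sin ^ m`
this is evaluated through the central binomial coefficient.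
-/

theorem integral_sin_pow_add_two_zero_pi_div_two (m : ℕ) :
    ∫ t in 0..π / 2, sin t ^ (m + 2) = (m + 1) / (m + 2) * ∫ t in 0..π / 2, sin t ^ m := by
  rw [integral_sin_pow]
  simp only [sin_zero, cos_pi_div_two, zero_pow (Nat.succ_ne_zero _), zero_mul, mul_zero,
    sub_self, zero_div, zero_add]

theorem integral_sin_pow_mul_cos_sq_zero_pi_div_two (m : ℕ) :
    ∫ t in 0..π / 2, sin t ^ m * cos t ^ 2 = (∫ t in 0..π / 2, sin t ^ m) / (m + 2) := by
  have hsplit (t : ℝ) : sin t ^ m * cos t ^ 2 = sin t ^ m - sin t ^ (m + 2) := by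
    rw [cos_sq']
    ring
  have hint (k : ℕ) : IntervalIntegrable (fun t => sin t ^ k) volume 0 (π / 2) :=
    (continuous_sin.pow k).intervalIntegrable _ _
  simp only [hsplit]
  rw [integral_sub (hint m) (hint (m + 2)), integral_sin_pow_add_two_zero_pi_div_two]
  field_simp
  ring

theorem integral_sin_pow_two_mul_zero_pi_div_two (n : ℕ) :
    ∫ t in 0..π / 2, sin t ^ (2 * n) = π / 2 * n.centralBinom / 4 ^ n := by
  induction n with
  | zero => simp
  | succ n ih =>
    have hrec : (n + 1 : ℝ) * (n + 1).centralBinom = 2 * (2 * n + 1) * n.centralBinom := by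
      exact_mod_cast Nat.succ_mul_centralBinom_succ n
    rw [mul_add_one, integral_sin_pow_add_two_zero_pi_div_two, ih]
    push_cast
    field_simp
    linear_combination (-2 * 4 ^ n : ℝ) * hrec

theorem sqrt_sub_mul_sin_sq_div_mul_sin_sq {c t : ℝ} (hc : c ≠ 0) (ht : t ∈ Icc 0 (π / 2)) :
    √((c - c * sin t ^ 2) / (c * sin t ^ 2)) = cos t / sin t := by
  have hsin : 0 ≤ sin t := sin_nonneg_of_nonneg_of_le_pi ht.1 (by linarith [ht.2, pi_pos])
  have hcos : 0 ≤ cos t := cos_nonneg_of_mem_Icc ⟨by linarith [ht.1, pi_pos], ht.2⟩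
  rw [← mul_one_sub, ← cos_sq', mul_div_mul_left _ _ hc, ← div_pow, sqrt_sq (by positivity)]

theorem integral_pow_mul_sqrt_sub_div {c : ℝ} (hc : 0 < c) (n : ℕ) :
    ∫ x in 0..c, x ^ n * √((c - x) / x)
      = π * c ^ (n + 1) * n.centralBinom / (2 * 4 ^ n * (n + 1)) := by
  have hpi : 0 ≤ π / 2 := by positivity
  have hderiv (t : ℝ) : HasDerivAt (fun t => c * sin t ^ 2) (2 * c * sin t * cos t) t := by
    refine (((hasDerivAt_sin t).pow 2).const_mul c).congr_deriv ?_
    push_cast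
    ring
  have hderiv_nonneg : ∀ t ∈ Ioo (min 0 (π / 2)) (max 0 (π / 2)), 0 ≤ 2 * c * sin t * cos t := by
    rw [min_eq_left hpi, max_eq_right hpi]
    intro t ht
    have := sin_nonneg_of_nonneg_of_le_pi ht.1.le (by linarith [ht.2, pi_pos])
    have := cos_nonneg_of_mem_Icc ⟨by linarith [ht.1, pi_pos], ht.2.le⟩
    positivity
  -- At `t = 0` the two sides differ when `n = 0`, because `√(c / 0) = 0`.
  have hintegrand : ∀ t ∈ uIoc 0 (π / 2),
      (c * sin t ^ 2) ^ n * √((c - c * sin t ^ 2) / (c * sin t ^ 2)) * (2 * c * sin t * cos t)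
        = 2 * c ^ (n + 1) * (sin t ^ (2 * n) * cos t ^ 2) := by
    rw [uIoc_of_le hpi]
    intro t ht
    have hsin : sin t ≠ 0 := (sin_pos_of_pos_of_lt_pi ht.1 (by linarith [ht.2, pi_pos])).ne'
    rw [sqrt_sub_mul_sin_sq_div_mul_sin_sq hc.ne' (Ioc_subset_Icc_self ht)]
    field_simp
    ring
  calc ∫ x in 0..c, x ^ n * √((c - x) / x)
      = ∫ t in 0..π / 2, ((fun x => x ^ n * √((c - x) / x)) ∘ fun t => c * sin t ^ 2) t
          * (2 * c * sin t * cos t) := by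
        rw [integral_comp_mul_deriv_of_deriv_nonneg (by fun_prop) (fun t _ => hderiv t)
          hderiv_nonneg]
        simp
    _ = ∫ t in 0..π / 2, 2 * c ^ (n + 1) * (sin t ^ (2 * n) * cos t ^ 2) :=
        integral_congr_ae (ae_of_all _ hintegrand)
    _ = π * c ^ (n + 1) * n.centralBinom / (2 * 4 ^ n * (n + 1)) := by
        rw [intervalIntegral.integral_const_mul, integral_sin_pow_mul_cos_sq_zero_pi_div_two,
          integral_sin_pow_two_mul_zero_pi_div_two]
        push_cast
        field_simp

theorem catalan_moments (n : ℕ) :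
    (1 / (2 * π)) * ∫ x in (0:ℝ)..4, x ^ n * Real.sqrt ((4 - x) / x)
      = (1 / (n + 1 : ℝ)) * (Nat.choose (2 * n) n : ℝ) := by
  rw [integral_pow_mul_sqrt_sub_div four_pos, ← Nat.centralBinom_eq_two_mul_choose]
  field_simp
  ring
end

section
/- For every natural number n, (1/(2π)) ∫_{-1}^{3} x^n √((3-x)(1+x)) dx equals the n-th Motzkin number M_n, i.e. the coefficient of x^n in (1 - x - √(1-2x-3x²))/(2x²). -/
/-!
Expanding `1 / (1 - t x)` geometrically, the generating series `∑ mₙ tⁿ` of the moments equals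
`(1 / 2π) ∫ √((3 - x)(1 + x)) / (1 - t x) dx` for small `t`. The substitution `x = 2 y + 1`
turns this into the classical integral `∫_{-1}^{1} √(1 - y²) / (c - y) dy = π (c - √(c² - 1))`
with `c = (1 - t) / 2t`, which evaluates to the Motzkin generating function. The two power
series then agree on an interval `(0, δ)`, so by the identity theorem their coefficients agree.
-/

open MeasureTheory Real intervalIntegral
open Set Filter Topology

theorem eq_zero_of_frequently_hasSum_mul_pow_zero {𝕜 : Type*} [NontriviallyNormedField 𝕜]
    [CompleteSpace 𝕜] {c : ℕ → 𝕜}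
    (h : ∃ᶠ y in 𝓝[≠] (0 : 𝕜), HasSum (fun n => c n * y ^ n) 0) : c = 0 := by
  set p := FormalMultilinearSeries.ofScalars 𝕜 c
  obtain ⟨y, hy, hy0⟩ := (h.and_eventually self_mem_nhdsWithin).exists
  have hradius : (‖y‖₊ : ENNReal) ≤ p.radius := by
    refine p.le_radius_of_tendsto (l := 0) ?_
    simpa [p, FormalMultilinearSeries.ofScalars_norm] using hy.summable.tendsto_atTop_zero.norm
  have hp : HasFPowerSeriesAt p.sum p 0 :=
    (p.hasFPowerSeriesOnBall (hradius.trans_lt' (by simpa using hy0))).hasFPowerSeriesAt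
  have hsum : ∀ z, p.sum z = ∑' n, c n * z ^ n := fun z => by
    simp [p, FormalMultilinearSeries.sum, mul_comm]
  have hzero : ∀ᶠ z in 𝓝 0, p.sum z = 0 :=
    hp.analyticAt.frequently_zero_iff_eventually_zero.mp
      (h.mono fun z hz => (hsum z).trans hz.tsum_eq)
  exact (FormalMultilinearSeries.ofScalars_series_eq_zero 𝕜).mp (hp.congr hzero).eq_zero

theorem hasSum_intervalIntegral_pow_mul_mul_pow {w : ℝ → ℝ} {a b t R : ℝ}
    (hw : ContinuousOn w (uIcc a b)) (hR : ∀ x ∈ uIcc a b, |x| ≤ R) (htR : |t| * R < 1) :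
    HasSum (fun n => (∫ x in a..b, x ^ n * w x) * t ^ n) (∫ x in a..b, w x / (1 - t * x)) := by
  obtain ⟨C, hC⟩ := isCompact_uIcc.exists_bound_of_continuousOn hw
  have htx : ∀ x ∈ uIcc a b, |t * x| ≤ |t| * R := fun x hx => by
    rw [abs_mul]; exact mul_le_mul_of_nonneg_left (hR x hx) (abs_nonneg t)
  have hq : 0 ≤ |t| * R := (abs_nonneg _).trans (htx a left_mem_uIcc)
  have hterm : ∀ n, (∫ x in a..b, x ^ n * w x) * t ^ n = ∫ x in a..b, (t * x) ^ n * w x :=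
    fun n => by rw [← intervalIntegral.integral_mul_const]; congr 1; ext x; ring
  simp_rw [hterm]
  refine hasSum_integral_of_dominated_convergence (fun n _ => (|t| * R) ^ n * C)
    (fun n => ((by fun_prop : Continuous fun x : ℝ => (t * x) ^ n).continuousOn.mul hw).mono
      uIoc_subset_uIcc |>.aestronglyMeasurable measurableSet_uIoc)
    (fun n => ae_of_all _ fun x hx => ?_) (ae_of_all _ fun _ _ =>
      (summable_geometric_of_lt_one hq htR).mul_right C) intervalIntegrable_const
    (ae_of_all _ fun x hx => ?_)
  · rw [norm_mul, norm_pow, norm_eq_abs]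
    exact mul_le_mul (pow_le_pow_left₀ (abs_nonneg _) (htx x (uIoc_subset_uIcc hx)) n)
      (hC x (uIoc_subset_uIcc hx)) (norm_nonneg _) (pow_nonneg hq n)
  · rw [div_eq_inv_mul]
    exact (hasSum_geometric_of_abs_lt_one ((htx x (uIoc_subset_uIcc hx)).trans_lt htR)).mul_right _

theorem hasDerivAt_sqrt_one_sub_sq {y : ℝ} (hy : y ∈ Ioo (-1 : ℝ) 1) :
    HasDerivAt (fun y => √(1 - y ^ 2)) (-y / √(1 - y ^ 2)) y := by
  have h : 1 - y ^ 2 ≠ 0 := by nlinarith [hy.1, hy.2]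
  convert ((hasDerivAt_pow 2 y).const_sub 1).sqrt h using 1
  field_simp
  ring

theorem hasDerivAt_arcsin_one_sub_mul_div_sub {c y : ℝ} (hc : 1 < c) (hy : y ∈ Ioo (-1 : ℝ) 1) :
    HasDerivAt (fun y => arcsin ((1 - c * y) / (c - y)))
      (-√(c ^ 2 - 1) / ((c - y) * √(1 - y ^ 2))) y := by
  have hcy : 0 < c - y := by linarith [hy.2]
  have hy2 : 0 < 1 - y ^ 2 := by nlinarith [hy.1, hy.2]
  have hc2 : 0 < c ^ 2 - 1 := by nlinarith
  have hkey : 1 - ((1 - c * y) / (c - y)) ^ 2 = (√(c ^ 2 - 1) * √(1 - y ^ 2) / (c - y)) ^ 2 := by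
    rw [div_pow, div_pow, mul_pow, sq_sqrt hc2.le, sq_sqrt hy2.le]
    field_simp
    ring
  have hu : ((1 - c * y) / (c - y)) ^ 2 < 1 := by
    have : 0 < (√(c ^ 2 - 1) * √(1 - y ^ 2) / (c - y)) ^ 2 := by positivity
    linarith
  have hquot : HasDerivAt (fun y => (1 - c * y) / (c - y)) ((1 - c ^ 2) / (c - y) ^ 2) y := by
    refine (((hasDerivAt_id y).const_mul c).const_sub 1 |>.div
      ((hasDerivAt_id y).const_sub c) hcy.ne').congr_deriv ?_
    simp only [id]
    ring
  refine ((hasDerivAt_arcsin (by nlinarith) (by nlinarith)).comp y hquot).congr_deriv ?_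
  rw [hkey, sqrt_sq (by positivity)]
  field_simp
  rw [sq_sqrt hc2.le]
  ring

theorem integral_sqrt_one_sub_sq_div_sub {c : ℝ} (hc : 1 < c) :
    ∫ y in (-1 : ℝ)..1, √(1 - y ^ 2) / (c - y) = π * (c - √(c ^ 2 - 1)) := by
  -- the antiderivative comes from
  -- `√(1 - y²) / (c - y) = (c + y) / √(1 - y²) - (c² - 1) / ((c - y) √(1 - y²))`
  have hcy : ∀ y ∈ Icc (-1 : ℝ) 1, c - y ≠ 0 := fun y hy => by linarith [hy.2]
  have hderiv : ∀ y ∈ Ioo (-1 : ℝ) 1, HasDerivAt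
      (fun y => c * arcsin y - √(1 - y ^ 2) + √(c ^ 2 - 1) * arcsin ((1 - c * y) / (c - y)))
      (√(1 - y ^ 2) / (c - y)) y := by
    intro y hy
    have hy2 : 0 < 1 - y ^ 2 := by nlinarith [hy.1, hy.2]
    have hcy' : 0 < c - y := by linarith [hy.2]
    refine ((((hasDerivAt_arcsin (by linarith [hy.1]) (by linarith [hy.2])).const_mul c).sub
      (hasDerivAt_sqrt_one_sub_sq hy)).add
      ((hasDerivAt_arcsin_one_sub_mul_div_sub hc hy).const_mul (√(c ^ 2 - 1)))).congr_deriv ?_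
    have hs := sq_sqrt hy2.le
    field_simp
    rw [hs, sq_sqrt (by nlinarith)]
    ring
  have hcont : ContinuousOn
      (fun y => c * arcsin y - √(1 - y ^ 2) + √(c ^ 2 - 1) * arcsin ((1 - c * y) / (c - y)))
      (Icc (-1) 1) :=
    (by fun_prop : Continuous fun y => c * arcsin y - √(1 - y ^ 2)).continuousOn.add
      (continuousOn_const.mul
        (continuous_arcsin.comp_continuousOn (ContinuousOn.div (by fun_prop) (by fun_prop) hcy)))
  have hint : IntervalIntegrable (fun y => √(1 - y ^ 2) / (c - y)) volume (-1) 1 :=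
    (ContinuousOn.div (by fun_prop) (by fun_prop) hcy).intervalIntegrable_of_Icc (by norm_num)
  rw [integral_eq_sub_of_hasDerivAt_of_le (by norm_num) hcont hderiv hint]
  have hc1 : c - 1 ≠ 0 := by linarith
  have hc1' : c + 1 ≠ 0 := by linarith
  simp only [arcsin_one, arcsin_neg_one, one_pow, sub_self, sqrt_zero, mul_one, mul_neg,
    sub_neg_eq_add, neg_sq, show (1 - c) / (c - 1) = -1 by field_simp; ring,
    show (1 + c) / (c + 1) = 1 by field_simp; ring]
  ring

noncomputable def motzkinGF (t : ℝ) : ℝ := (1 - t - √(1 - 2 * t - 3 * t ^ 2)) / (2 * t ^ 2)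

theorem motzkinGF_pos {t : ℝ} (ht0 : 0 < t) (ht : t < 1 / 3) : 0 < motzkinGF t := by
  have hlt : √(1 - 2 * t - 3 * t ^ 2) < √((1 - t) ^ 2) :=
    sqrt_lt_sqrt (by nlinarith) (by nlinarith)
  rw [sqrt_sq (by linarith)] at hlt
  exact div_pos (by linarith) (by positivity)

theorem integral_sqrt_div_one_sub_mul {t : ℝ} (ht0 : 0 < t) (ht : t < 1 / 3) :
    ∫ x in (-1 : ℝ)..3, √((3 - x) * (1 + x)) / (1 - t * x) = 2 * π * motzkinGF t := by
  set c := (1 - t) / (2 * t)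
  have hc : 1 < c := by rw [lt_div_iff₀ (by positivity)]; linarith
  have hsubst : ∀ y : ℝ, √((3 - (2 * y + 1)) * (1 + (2 * y + 1))) / (1 - t * (2 * y + 1))
      = 1 / t * (√(1 - y ^ 2) / (c - y)) := fun y => by
    rw [show (3 - (2 * y + 1)) * (1 + (2 * y + 1)) = 2 ^ 2 * (1 - y ^ 2) by ring,
      sqrt_mul (by positivity), sqrt_sq zero_le_two,
      show 1 - t * (2 * y + 1) = 2 * t * (c - y) by simp only [c]; field_simp; ring,
      mul_div_mul_comm, div_mul_cancel_left₀ two_ne_zero, one_div]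
  have hroot : √(c ^ 2 - 1) = √(1 - 2 * t - 3 * t ^ 2) / (2 * t) := by
    have hsq : c ^ 2 - 1 = (√(1 - 2 * t - 3 * t ^ 2) / (2 * t)) ^ 2 := by
      rw [div_pow, div_pow, sq_sqrt (by nlinarith)]
      field_simp
      ring
    rw [hsq, sqrt_sq (by positivity)]
  have h := integral_comp_mul_add (a := -1) (b := 1)
    (fun x => √((3 - x) * (1 + x)) / (1 - t * x)) two_ne_zero 1
  norm_num only [hsubst, intervalIntegral.integral_const_mul,
    integral_sqrt_one_sub_sq_div_sub hc, hroot] at h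
  rw [smul_eq_mul] at h
  simp only [c] at h
  rw [motzkinGF]
  field_simp at h ⊢
  linear_combination -h

theorem hasSum_motzkin_moments {t : ℝ} (ht0 : 0 < t) (ht : t < 1 / 3) :
    HasSum (fun n : ℕ => ((1 / (2 * π)) * ∫ x in (-1 : ℝ)..3, x ^ n * √((3 - x) * (1 + x))) * t ^ n)
      (motzkinGF t) := by
  have hR : ∀ x ∈ uIcc (-1 : ℝ) 3, |x| ≤ 3 := fun x hx => by
    rw [uIcc_of_le (by norm_num)] at hx
    exact abs_le.mpr ⟨by linarith [hx.1], hx.2⟩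
  have h := (hasSum_intervalIntegral_pow_mul_mul_pow (w := fun x => √((3 - x) * (1 + x)))
    (by fun_prop : Continuous _).continuousOn hR
    (by rw [abs_of_pos ht0]; linarith)).mul_left (1 / (2 * π))
  rw [integral_sqrt_div_one_sub_mul ht0 ht, ← mul_assoc, one_div_mul_cancel (by positivity),
    one_mul] at h
  simpa only [mul_assoc] using h

theorem motzkin_moments (M : ℕ → ℝ)
    (hM : ∃ ε > (0:ℝ), ∀ x : ℝ, x ≠ 0 → |x| < ε →
      ∑' n : ℕ, M n * x ^ n
        = (1 - x - Real.sqrt (1 - 2 * x - 3 * x ^ 2)) / (2 * x ^ 2)) :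
    ∀ n : ℕ,
      (1 / (2 * π)) * ∫ x in (-1:ℝ)..3, x ^ n * Real.sqrt ((3 - x) * (1 + x)) = M n := by
  obtain ⟨ε, hε, hM⟩ := hM
  have hagree : ∀ t ∈ Ioo 0 (min ε (1 / 3)), HasSum (fun n => ((1 / (2 * π)) *
      (∫ x in (-1 : ℝ)..3, x ^ n * √((3 - x) * (1 + x))) - M n) * t ^ n) 0 := by
    rintro t ⟨ht0, ht⟩
    have hMt : ∑' n, M n * t ^ n = motzkinGF t :=
      hM t ht0.ne' ((abs_of_pos ht0).trans_lt (ht.trans_le (min_le_left _ _)))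
    have hsummable : Summable fun n => M n * t ^ n := by
      by_contra h
      exact (motzkinGF_pos ht0 (ht.trans_le (min_le_right _ _))).ne'
        (hMt ▸ tsum_eq_zero_of_not_summable h)
    have hMsum : HasSum (fun n => M n * t ^ n) (motzkinGF t) := hMt ▸ hsummable.hasSum
    have h := (hasSum_motzkin_moments ht0 (ht.trans_le (min_le_right _ _))).sub hMsum
    rw [sub_self] at h
    simpa only [sub_mul] using h
  have hzero := eq_zero_of_frequently_hasSum_mul_pow_zero <|
    ((eventually_mem_set.mpr (Ioo_mem_nhdsGT (lt_min hε (by norm_num)))).mono hagree).frequently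
      |>.filter_mono (nhdsGT_le_nhdsNE 0)
  exact fun n => sub_eq_zero.mp (congrFun hzero n)
end
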